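/- arXiv:2503.09352 — 3 statements merged into one kernel-verified Lean document; each statement's English description precedes it below -/
import Mathlib

section
/- With the setup of the previous statement ($E$ additive with $E(xm) = m + xE(m)$, locally nilpotent on $m$), one has the expansion $m = \sum_{l=0}^{\infty} a_l x^l$ where $a_l = D\left(\frac{E^l m}{l!}\right)$ and $D(n) := \sum_{k=0}^{\infty} (-1)^k x^k \frac{E^k n}{k!}$; moreover each coefficient $a_l$ satisfies $E(a_l) = 0$. -/
section Aux

variable {R : Type*} [CommRing R] [Algebra ℚ R]
variable {M : Type*} [AddCommGroup M] [Module R M] [Module ℚ M] [IsScalarTower ℚ R M]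

/-- Iterates of an additive map between `ℚ`-modules commute with `ℚ`-scalars. -/
lemma iterate_map_rat_smul (E : M →+ M) (k : ℕ) (q : ℚ) (v : M) :
    E^[k] (q • v) = q • E^[k] v := by
  induction k with
  | zero => simp
  | succ k ih => rw [Function.iterate_succ_apply', ih, map_rat_smul,
      Function.iterate_succ_apply']

/-- Leibniz-type rule for powers. -/
lemma E_pow_smul (x : R) (E : M →+ M) (hE : ∀ m : M, E (x • m) = m + x • E m)
    (k : ℕ) (v : M) :
    E (x ^ k • v) = (k : ℚ) • (x ^ (k - 1) • v) + x ^ k • E v := by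
  induction k with
  | zero => simp
  | succ k ih =>
    have hxs : x ^ (k + 1) • v = x • (x ^ k • v) := by
      rw [pow_succ, mul_comm, mul_smul]
    rw [hxs, hE, ih]
    cases k with
    | zero => simp [pow_succ]
    | succ k =>
      simp only [Nat.add_sub_cancel, smul_add]
      push_cast
      rw [smul_comm x ((k : ℚ) + 1)]
      have h1 : x • (x ^ k • v) = x ^ (k+1) • v := by
        rw [pow_succ, mul_comm, mul_smul]
      have h2 : x • (x ^ (k+1) • E v) = x ^ (k+1+1) • E v := by
        rw [pow_succ _ (k+1), mul_comm, mul_smul]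
      rw [h1, h2]
      module

end Aux

/-- With `E` additive satisfying `E (x • m) = m + x • E m` and `E^[N] m = 0`, one has
the expansion `m = ∑ l, a_l • x^l` (a finite sum, over `range N`), where
`a_l = D (E^[l] m / l!)` with `D n = ∑ k, (-1)^k • x^k • (E^[k] n / k!)`;
moreover each coefficient `a_l` is killed by `E`. -/
theorem taylor_expansion_along_derivation
    (R : Type*) [CommRing R] [Algebra ℚ R]
    (M : Type*) [AddCommGroup M] [Module R M] [Module ℚ M] [IsScalarTower ℚ R M]
    (x : R) (E : M →+ M)
    (hE : ∀ m : M, E (x • m) = m + x • E m)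
    (m : M) (N : ℕ) (hN : E^[N] m = 0)
    (a : ℕ → M)
    (ha : ∀ l, a l = ∑ k ∈ Finset.range N,
        (((-1 : ℚ) ^ k / (k.factorial : ℚ)) •
          (x ^ k • E^[k] (((l.factorial : ℚ))⁻¹ • E^[l] m)))) :
    m = ∑ l ∈ Finset.range N, x ^ l • a l ∧ ∀ l, E (a l) = 0 := by
  -- vanishing of high iterates
  have hvan : ∀ j, N ≤ j → E^[j] m = 0 := by
    intro j hj
    have : j = (j - N) + N := (Nat.sub_add_cancel hj).symm
    rw [this, Function.iterate_add_apply, hN]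
    simp
  rcases Nat.eq_zero_or_pos N with hN0 | hNpos
  · subst hN0
    simp only [Function.iterate_zero, id_eq] at hN
    subst hN
    constructor
    · simp
    · intro l
      rw [ha]
      simp
  obtain ⟨N', rfl⟩ : ∃ N'', N = N'' + 1 := ⟨N - 1, (Nat.succ_pred_eq_of_pos hNpos).symm⟩
  constructor
  · -- the expansion
    have key : ∀ l ∈ Finset.range (N' + 1), x ^ l • a l =
        ∑ k ∈ Finset.range ((N' + 1) - l),
          (((-1 : ℚ) ^ k / ((k.factorial : ℚ) * (l.factorial : ℚ))) •
            (x ^ (l + k) • E^[l + k] m)) := by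
      intro l hl
      rw [ha, Finset.smul_sum]
      have hpt : ∀ k : ℕ,
          x ^ l • (((-1 : ℚ) ^ k / (k.factorial : ℚ)) •
            (x ^ k • E^[k] (((l.factorial : ℚ))⁻¹ • E^[l] m))) =
          (((-1 : ℚ) ^ k / ((k.factorial : ℚ) * (l.factorial : ℚ))) •
            (x ^ (l + k) • E^[l + k] m)) := by
        intro k
        rw [iterate_map_rat_smul, ← Function.iterate_add_apply, Nat.add_comm k l,
          smul_comm (x ^ k) ((l.factorial : ℚ)⁻¹),
          smul_smul ((-1 : ℚ) ^ k / (k.factorial : ℚ)) ((l.factorial : ℚ)⁻¹),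
          smul_comm (x ^ l) ((-1 : ℚ) ^ k / (k.factorial : ℚ) * (l.factorial : ℚ)⁻¹),
          smul_smul (x ^ l) (x ^ k), ← pow_add]
        congr 1
        field_simp
      rw [Finset.sum_congr rfl (fun k _ => hpt k)]
      refine (Finset.sum_subset (Finset.range_subset_range.2 (Nat.sub_le (N' + 1) l)) ?_).symm
      intro k _ hk'
      have hNk : (N' + 1) ≤ l + k := by
        simp only [Finset.mem_range, not_lt] at hk'
        simp only [Finset.mem_range] at hl
        omega
      rw [hvan _ hNk]
      simp
    rw [Finset.sum_congr rfl key]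
    -- reindex the double sum by j = l + k
    have reindex :
        ∑ l ∈ Finset.range (N' + 1), ∑ k ∈ Finset.range ((N' + 1) - l),
          (((-1 : ℚ) ^ k / ((k.factorial : ℚ) * (l.factorial : ℚ))) •
            (x ^ (l + k) • E^[l + k] m)) =
        ∑ j ∈ Finset.range (N' + 1), ∑ k ∈ Finset.range (j + 1),
          (((-1 : ℚ) ^ k / ((k.factorial : ℚ) * ((j - k).factorial : ℚ))) •
            (x ^ j • E^[j] m)) := by
      rw [Finset.sum_sigma', Finset.sum_sigma']
      refine Finset.sum_nbij' (i := fun p => (⟨p.1 + p.2, p.2⟩ : Σ _ : ℕ, ℕ))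
        (j := fun p => (⟨p.1 - p.2, p.2⟩ : Σ _ : ℕ, ℕ)) ?_ ?_ ?_ ?_ ?_
      · rintro ⟨l, k⟩ hp
        simp only [Finset.mem_sigma, Finset.mem_range] at hp ⊢
        omega
      · rintro ⟨j, k⟩ hp
        simp only [Finset.mem_sigma, Finset.mem_range] at hp ⊢
        omega
      · rintro ⟨l, k⟩ hp
        simp only [Nat.add_sub_cancel]
      · rintro ⟨j, k⟩ hp
        simp only [Finset.mem_sigma, Finset.mem_range] at hp
        have hjk : j - k + k = j := by omega
        simp [hjk]
      · rintro ⟨l, k⟩ hp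
        simp only [Finset.mem_sigma, Finset.mem_range] at hp
        simp only [Nat.add_sub_cancel]
    rw [reindex]
    -- the inner alternating sum collapses
    have inner : ∀ j ∈ Finset.range (N' + 1),
        ∑ k ∈ Finset.range (j + 1),
          (((-1 : ℚ) ^ k / ((k.factorial : ℚ) * ((j - k).factorial : ℚ))) •
            (x ^ j • E^[j] m)) =
        (if j = 0 then (1:ℚ) else 0) • (x ^ j • E^[j] m) := by
      intro j _
      rw [← Finset.sum_smul]
      congr 1
      have hco : ∀ k ∈ Finset.range (j + 1),
          ((-1 : ℚ) ^ k / ((k.factorial : ℚ) * ((j - k).factorial : ℚ))) =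
          ((-1 : ℚ) ^ k * (j.choose k : ℚ)) / (j.factorial : ℚ) := by
        intro k hk
        rw [Nat.cast_choose ℚ (Finset.mem_range_succ_iff.1 hk)]
        have h1 : ((k.factorial : ℚ) * ((j - k).factorial : ℚ)) ≠ 0 := by
          positivity
        have h2 : (j.factorial : ℚ) ≠ 0 := by positivity
        field_simp
      rw [Finset.sum_congr rfl hco, ← Finset.sum_div]
      have halt := Int.alternating_sum_range_choose (n := j)
      have hcast : ∑ k ∈ Finset.range (j + 1), ((-1 : ℚ) ^ k * (j.choose k : ℚ)) =
          ((∑ i ∈ Finset.range (j + 1), ((-1 : ℤ) ^ i * (j.choose i : ℤ)) : ℤ) : ℚ) := by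
        push_cast
        rfl
      rw [hcast, halt]
      rcases Nat.eq_zero_or_pos j with rfl | hj
      · simp
      · rw [if_neg (Nat.pos_iff_ne_zero.1 hj), if_neg (Nat.pos_iff_ne_zero.1 hj)]
        simp
    rw [Finset.sum_congr rfl inner]
    simp only [ite_smul, one_smul, zero_smul]
    rw [Finset.sum_ite_eq' (Finset.range (N' + 1)) 0 (fun j => x ^ j • E^[j] m)]
    rw [if_pos (Finset.mem_range.2 hNpos)]
    simp
  · -- each coefficient is killed by E
    intro l
    set n : M := ((l.factorial : ℚ))⁻¹ • E^[l] m with hn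
    have hEn : E^[(N' + 1)] n = 0 := by
      rw [hn, iterate_map_rat_smul, ← Function.iterate_add_apply, hvan _ (by omega)]
      simp
    set h : ℕ → M := fun k => ((-1 : ℚ) ^ k / (k.factorial : ℚ)) • (x ^ k • E^[k+1] n)
      with hh
    set F : ℕ → M := fun k => Nat.rec 0 (fun k _ => h k) k with hF
    rw [ha l, map_sum]
    have term : ∀ k ∈ Finset.range (N' + 1),
        E ((((-1 : ℚ) ^ k / (k.factorial : ℚ)) • (x ^ k • E^[k] n))) =
        F (k + 1) - F k := by
      intro k _
      rw [map_rat_smul, E_pow_smul x E hE, smul_add]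
      have hEit : E (E^[k] n) = E^[k+1] n := (Function.iterate_succ_apply' E k n).symm
      rw [hEit]
      cases k with
      | zero => simp [hF, hh]
      | succ j =>
        show _ = h (j+1) - h j
        rw [hh]
        simp only [Nat.add_sub_cancel]
        have hfac : ((j+1).factorial : ℚ) = ((j:ℚ)+1) * (j.factorial : ℚ) := by
          rw [Nat.factorial_succ]; push_cast; ring
        have h1 : ((-1 : ℚ) ^ (j+1) / ((j+1).factorial : ℚ)) • ((((j:ℕ)+1 : ℕ) : ℚ) • (x ^ j • E^[j+1] n))
            = -(((-1 : ℚ) ^ j / (j.factorial : ℚ)) • (x ^ j • E^[j+1] n)) := by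
          rw [smul_smul, ← neg_smul]
          congr 1
          rw [hfac, pow_succ]
          have hf0 : (j.factorial : ℚ) ≠ 0 := by positivity
          have hj0 : ((j:ℚ)+1) ≠ 0 := by positivity
          push_cast
          field_simp
        rw [h1]
        abel
    rw [Finset.sum_congr rfl term, Finset.sum_range_sub F (N' + 1)]
    have hFN : F (N' + 1) = h N' := rfl
    rw [hFN, hh]
    simp only
    rw [show N' + 1 = (N' + 1) from rfl, hEn]
    simp [hF]
end

section
/- Let $M$ be a $\mathbb{Q}$-vector space with a locally nilpotent additive operator $E$ and an element $x$ acting as above (so $E(xm) = m + xE(m)$). If $m = \sum_{l} b_l x^l$ is any finite expansion with coefficients $b_l \in \ker E$, then $b_l = D(E^l m / l!)$ for all $l$; i.e., the coefficients in such an expansion are uniquely determined by $m$. -/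
section Aux

variable {R : Type*} [CommRing R] [Algebra ℚ R]
  {M : Type*} [AddCommGroup M] [Module R M] [Module ℚ M] [IsScalarTower ℚ R M]
  (x : R) (E : M →+ M)

lemma aux_E_pow_smul (hE : ∀ m : M, E (x • m) = m + x • E m)
    {c : M} (hc : E c = 0) (t : ℕ) :
    E (x ^ t • c) = t • x ^ (t - 1) • c := by
  induction t with
  | zero => simpa using hc
  | succ s ih =>
    rw [pow_succ, mul_comm, mul_smul, hE, ih]
    cases s with
    | zero => simp [hc]
    | succ r =>
      rw [smul_comm x (r + 1), Nat.add_sub_cancel, ← mul_smul, ← pow_succ']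
      conv_rhs => rw [Nat.add_sub_cancel, succ_nsmul]
      exact add_comm _ _

lemma aux_iter (hE : ∀ m : M, E (x • m) = m + x • E m)
    {c : M} (hc : E c = 0) (j k : ℕ) :
    E^[k] (x ^ j • c) = j.descFactorial k • x ^ (j - k) • c := by
  induction k with
  | zero => simp
  | succ k ih =>
    rw [Function.iterate_succ_apply', ih, map_nsmul, aux_E_pow_smul x E hE hc,
      Nat.descFactorial_succ, smul_smul, mul_comm, Nat.sub_sub]

lemma aux_iter_sum {ι : Type*} (s : Finset ι) (f : ι → M) (k : ℕ) :
    E^[k] (∑ i ∈ s, f i) = ∑ i ∈ s, E^[k] (f i) := by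
  induction k with
  | zero => simp
  | succ k ih =>
    rw [Function.iterate_succ_apply', ih, map_sum]
    simp [Function.iterate_succ_apply']

lemma aux_iter_qsmul (q : ℚ) (v : M) (k : ℕ) :
    E^[k] (q • v) = q • E^[k] v := by
  induction k with
  | zero => simp
  | succ k ih =>
    rw [Function.iterate_succ_apply', ih, map_rat_smul,
      Function.iterate_succ_apply']

lemma aux_zero_exp (hE : ∀ m : M, E (x • m) = m + x • E m) :
    ∀ (T : ℕ) (c : ℕ → M), (∀ j, E (c j) = 0) →
      (∑ j ∈ Finset.range T, x ^ j • c j) = 0 → ∀ j, j < T → c j = 0 := by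
  intro T
  induction T with
  | zero => intro c _ _ j hj; exact absurd hj (Nat.not_lt_zero j)
  | succ T ih =>
    intro c hker hsum j hj
    have hT : c T = 0 := by
      have h1 := congrArg (E^[T]) hsum
      rw [aux_iter_sum, iterate_map_zero] at h1
      have h2 : ∀ i ∈ Finset.range (T + 1),
          E^[T] (x ^ i • c i) = i.descFactorial T • x ^ (i - T) • c i :=
        fun i _ => aux_iter x E hE (hker i) i T
      rw [Finset.sum_congr rfl h2, Finset.sum_range_succ] at h1
      have h3 : ∀ i ∈ Finset.range T, i.descFactorial T • x ^ (i - T) • c i = 0 := by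
        intro i hi
        rw [Nat.descFactorial_eq_zero_iff_lt.mpr (Finset.mem_range.mp hi), zero_smul]
      rw [Finset.sum_eq_zero h3, zero_add, Nat.descFactorial_self, Nat.sub_self,
        pow_zero, one_smul] at h1
      have h4 : (T.factorial : ℚ) • c T = 0 := by
        rw [Nat.cast_smul_eq_nsmul]; exact h1
      rcases smul_eq_zero.mp h4 with h | h
      · exact absurd h (by exact_mod_cast T.factorial_ne_zero)
      · exact h
    rcases Nat.lt_succ_iff_lt_or_eq.mp hj with hj' | hj'
    · refine ih c hker ?_ j hj'
      rw [Finset.sum_range_succ, hT, smul_zero, add_zero] at hsum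
      exact hsum
    · rw [hj']; exact hT

end Aux

/-- Uniqueness of the coefficients: if `E` is additive with `E (x • m) = m + x • E m`,
locally nilpotent, and `m = ∑ l, x^l • b l` is any finite expansion with
coefficients `b l ∈ ker E`, then `b l = D (E^[l] m / l!)` for all `l`, where
`D n = ∑ k, (-1)^k • x^k • (E^[k] n / k!)` (a finite sum, computed over `range K`
for any `K` with `E^[K] m = 0`). -/
theorem uniqueness_of_expansion_coefficients
    (R : Type*) [CommRing R] [Algebra ℚ R]
    (M : Type*) [AddCommGroup M] [Module R M] [Module ℚ M] [IsScalarTower ℚ R M]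
    (x : R) (E : M →+ M)
    (hE : ∀ m : M, E (x • m) = m + x • E m)
    (hnil : ∀ v : M, ∃ K, E^[K] v = 0)
    (m : M) (N : ℕ) (b : ℕ → M)
    (hb0 : ∀ l, N ≤ l → b l = 0)
    (hbker : ∀ l, E (b l) = 0)
    (hm : m = ∑ l ∈ Finset.range N, x ^ l • b l) :
    ∀ K, E^[K] m = 0 → ∀ l, b l = ∑ k ∈ Finset.range K,
        (((-1 : ℚ) ^ k / (k.factorial : ℚ)) •
          (x ^ k • E^[k] (((l.factorial : ℚ))⁻¹ • E^[l] m))) := by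
  intro K hK l
  -- Step A: all coefficients with index ≥ K vanish.
  have hbK : ∀ j, K ≤ j → b j = 0 := by
    intro j hj
    by_cases hjN : N ≤ j
    · exact hb0 j hjN
    push_neg at hjN
    have hEKm : E^[K] m = ∑ i ∈ Finset.range N,
        i.descFactorial K • x ^ (i - K) • b i := by
      rw [hm, aux_iter_sum]
      exact Finset.sum_congr rfl fun i _ => aux_iter x E hE (hbker i) i K
    have hsub : Finset.Ico K N ⊆ Finset.range N := fun i hi =>
      Finset.mem_range.mpr (Finset.mem_Ico.mp hi).2
    have hEKm2 : E^[K] m = ∑ i ∈ Finset.Ico K N,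
        i.descFactorial K • x ^ (i - K) • b i := by
      rw [hEKm]
      refine (Finset.sum_subset hsub ?_).symm
      intro i hi1 hi2
      have hiN : i < N := Finset.mem_range.mp hi1
      have hiK : i < K := by
        rcases lt_or_ge i K with h | h
        · exact h
        · exact absurd (Finset.mem_Ico.mpr ⟨h, hiN⟩) hi2
      rw [Nat.descFactorial_eq_zero_iff_lt.mpr hiK, zero_smul]
    have hzero : (∑ t ∈ Finset.range (N - K),
        x ^ t • ((K + t).descFactorial K • b (K + t))) = 0 := by
      rw [← hK, hEKm2, Finset.sum_Ico_eq_sum_range]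
      refine Finset.sum_congr rfl fun t _ => ?_
      rw [Nat.add_sub_cancel_left, smul_comm]
    have hc : ∀ t, E ((K + t).descFactorial K • b (K + t)) = 0 := by
      intro t
      rw [map_nsmul, hbker, smul_zero]
    have h5 := aux_zero_exp x E hE (N - K) _ hc hzero (j - K) (by omega)
    have h6 : (j.descFactorial K : ℚ) • b j = 0 := by
      have h7 : K + (j - K) = j := by omega
      rw [h7] at h5
      rw [Nat.cast_smul_eq_nsmul]
      exact h5
    rcases smul_eq_zero.mp h6 with h | h
    · exfalso
      have : j.descFactorial K ≠ 0 := by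
        rw [Ne, Nat.descFactorial_eq_zero_iff_lt]
        omega
      exact this (by exact_mod_cast h)
    · exact h
  -- the expansion can be taken over `range K`
  have hmK : m = ∑ j ∈ Finset.range K, x ^ j • b j := by
    rw [hm]
    rcases le_total N K with h | h
    · refine Finset.sum_subset (Finset.range_subset_range.mpr h) ?_
      intro i _ hi2
      rw [hb0 i (le_of_not_gt (fun hh => hi2 (Finset.mem_range.mpr hh))), smul_zero]
    · refine (Finset.sum_subset (Finset.range_subset_range.mpr h) ?_).symm
      intro i _ hi2
      rw [hbK i (le_of_not_gt (fun hh => hi2 (Finset.mem_range.mpr hh))), smul_zero]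
  rcases le_or_gt K l with hlK | hlK
  -- Case l ≥ K : both sides are zero.
  · have hEl : E^[l] m = 0 := by
      have h1 : l = (l - K) + K := by omega
      rw [h1, Function.iterate_add_apply, hK, iterate_map_zero]
    rw [hbK l hlK, hEl]
    symm
    refine Finset.sum_eq_zero fun k _ => ?_
    rw [smul_zero, iterate_map_zero, smul_zero, smul_zero]
  -- Case l < K : the main computation.
  · have key : ∀ k, E^[k] (((l.factorial : ℚ))⁻¹ • E^[l] m) =
        ∑ j ∈ Finset.range K,
          (((l.factorial : ℚ))⁻¹ * (j.descFactorial (k + l) : ℚ)) •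
            (x ^ (j - (k + l)) • b j) := by
      intro k
      rw [aux_iter_qsmul, ← Function.iterate_add_apply, hmK, aux_iter_sum,
        Finset.smul_sum]
      refine Finset.sum_congr rfl fun j _ => ?_
      rw [aux_iter x E hE (hbker j) j (k + l), ← Nat.cast_smul_eq_nsmul ℚ, smul_smul]
    have step1 : (∑ k ∈ Finset.range K,
        (((-1 : ℚ) ^ k / (k.factorial : ℚ)) •
          (x ^ k • E^[k] (((l.factorial : ℚ))⁻¹ • E^[l] m)))) =
        ∑ j ∈ Finset.range K, ∑ k ∈ Finset.range K,
          (((-1 : ℚ) ^ k / (k.factorial : ℚ)) *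
            (((l.factorial : ℚ))⁻¹ * (j.descFactorial (k + l) : ℚ))) •
              (x ^ (k + (j - (k + l))) • b j) := by
      rw [Finset.sum_comm]
      refine Finset.sum_congr rfl fun k _ => ?_
      rw [key k, Finset.smul_sum, Finset.smul_sum]
      refine Finset.sum_congr rfl fun j _ => ?_
      rw [smul_comm (x ^ k), smul_smul, smul_smul, ← pow_add]
    rw [step1]
    have inner : ∀ j ∈ Finset.range K,
        (∑ k ∈ Finset.range K,
          (((-1 : ℚ) ^ k / (k.factorial : ℚ)) *
            (((l.factorial : ℚ))⁻¹ * (j.descFactorial (k + l) : ℚ))) •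
              (x ^ (k + (j - (k + l))) • b j)) = if j = l then b j else 0 := by
      intro j hj
      have hjK : j < K := Finset.mem_range.mp hj
      rcases lt_or_ge j l with hjl | hjl
      · rw [if_neg (by omega)]
        refine Finset.sum_eq_zero fun k _ => ?_
        rw [Nat.descFactorial_eq_zero_iff_lt.mpr (by omega)]
        simp
      · -- j ≥ l; set t = j - l
        obtain ⟨t, rfl⟩ : ∃ t, j = l + t := ⟨j - l, by omega⟩
        -- restrict the sum to range (t+1)
        have hsub2 : Finset.range (t + 1) ⊆ Finset.range K :=
          Finset.range_subset_range.mpr (by omega)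
        rw [← Finset.sum_subset hsub2 (by
          intro k _ hk2
          have : t < k := by
            rcases lt_or_ge t k with h | h
            · exact h
            · exact absurd (Finset.mem_range.mpr (by omega)) hk2
          rw [Nat.descFactorial_eq_zero_iff_lt.mpr (by omega)]
          simp)]
        have hexp : ∀ k ∈ Finset.range (t + 1),
            (((-1 : ℚ) ^ k / (k.factorial : ℚ)) *
              (((l.factorial : ℚ))⁻¹ * ((l + t).descFactorial (k + l) : ℚ))) •
                (x ^ (k + (l + t - (k + l))) • b (l + t)) =
            (((l + t).choose l : ℚ) * ((-1 : ℚ) ^ k * (t.choose k : ℚ))) •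
                (x ^ t • b (l + t)) := by
          intro k hk
          have hkt : k ≤ t := by
            have := Finset.mem_range.mp hk; omega
          have he : k + (l + t - (k + l)) = t := by omega
          rw [he]
          congr 1
          -- the scalar identity
          have natid : (l + t).descFactorial (k + l) =
              (l + t).choose l * (t.choose k * (k.factorial * l.factorial)) := by
            have h1 : (l + t).descFactorial (k + l) * (t - k).factorial =
                (l + t).factorial := by
              have hle : k + l ≤ l + t := by omega
              have hA := Nat.choose_mul_factorial_mul_factorial hle
              have heq : l + t - (k + l) = t - k := by omega
              rw [heq] at hA
              rw [Nat.descFactorial_eq_factorial_mul_choose, ← hA]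
              ring
            have h2 : ((l + t).choose l * (t.choose k * (k.factorial * l.factorial))) *
                (t - k).factorial = (l + t).factorial := by
              have hA := Nat.choose_mul_factorial_mul_factorial
                (show l ≤ l + t by omega)
              have heq : l + t - l = t := by omega
              rw [heq] at hA
              have hB := Nat.choose_mul_factorial_mul_factorial hkt
              calc ((l + t).choose l * (t.choose k * (k.factorial * l.factorial))) *
                    (t - k).factorial
                  = ((l + t).choose l * l.factorial) *
                    (t.choose k * k.factorial * (t - k).factorial) := by ring
                _ = ((l + t).choose l * l.factorial) * t.factorial := by rw [hB]
                _ = (l + t).factorial := hA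
            exact Nat.eq_of_mul_eq_mul_right (Nat.factorial_pos _) (h1.trans h2.symm)
          rw [natid]
          push_cast
          have hkf : (k.factorial : ℚ) ≠ 0 := by exact_mod_cast k.factorial_ne_zero
          have hlf : (l.factorial : ℚ) ≠ 0 := by exact_mod_cast l.factorial_ne_zero
          field_simp
        rw [Finset.sum_congr rfl hexp, ← Finset.sum_smul, ← Finset.mul_sum]
        have halt : (∑ k ∈ Finset.range (t + 1),
            ((-1 : ℚ) ^ k * (t.choose k : ℚ))) = if t = 0 then 1 else 0 := by
          have h0 := Int.alternating_sum_range_choose (n := t)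
          have h1 : ((∑ i ∈ Finset.range (t + 1), (-1 : ℤ) ^ i * (t.choose i : ℤ) : ℤ) : ℚ)
              = ∑ k ∈ Finset.range (t + 1), ((-1 : ℚ) ^ k * (t.choose k : ℚ)) := by
            push_cast
            rfl
          rw [← h1, h0]
          split <;> norm_num
        rw [halt]
        rcases Nat.eq_zero_or_pos t with ht | ht
        · subst ht
          simp
        · rw [if_neg (by omega), if_neg (by omega), mul_zero, zero_smul]
    rw [Finset.sum_congr rfl inner]
    rw [Finset.sum_ite_eq' (Finset.range K) l (fun j => b j)]
    rw [if_pos (Finset.mem_range.mpr hlK)]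
end

section
/- Let $V$ be a $\mathbb{Q}$-vector space equipped with pairwise commuting additive operators $E_0, \dots, E_{d-1}$, each locally nilpotent, and elements $x_0, \dots, x_{d-1}$ of a commutative ring acting on $V$ such that $E_i(x_j v) = \delta_{ij} v + x_j E_i(v)$ for all $i, j$ and $v \in V$. Then every $v \in V$ admits a finite expansion $v = \sum_{i_0, \dots, i_{d-1}} c_{i_0 \cdots i_{d-1}} x_0^{i_0} \cdots x_{d-1}^{i_{d-1}}$ with coefficients $c_{i_0 \cdots i_{d-1}}$ killed by all $E_0, \dots, E_{d-1}$. -/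
/-!
In one variable this is the Weyl relation `[E, X] = 1`. If `E^(N+1) v = 0`, expand
`E v = ∑ X^m b_m` with `E b_m = 0` by induction on `N`; since `E X^(m+1) = X^(m+1) E + (m+1) X^m`,
the vector `v - ∑ X^(m+1) b_m / (m+1)` is killed by `E`, which gives the expansion of `v`.
In several variables, expand `v` in `x_1, …, x_(d-1)` by induction on `d`. The coefficients lie in
`K = ⋂_{i ≥ 1} ker E_i`, which `E_0` and multiplication by `x_0` preserve, so each of them can be
expanded in `x_0` by the one-variable result applied inside `K`.
-/

open Finset

theorem mul_pow_succ_of_mul_eq_add_one {A : Type*} [Semiring A] {e a : A}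
    (h : e * a = a * e + 1) (n : ℕ) :
    e * a ^ (n + 1) = a ^ (n + 1) * e + (n + 1) * a ^ n := by
  induction n with
  | zero => simpa using h
  | succ n ih =>
    rw [pow_succ, ← mul_assoc, ih, add_mul, mul_assoc, h, mul_add, mul_one, ← mul_assoc,
      ← pow_succ, mul_assoc _ (a ^ n), ← pow_succ]
    push_cast
    simp only [add_mul, one_mul]
    abel

theorem Finset.exists_subset_piFinset_range {ι : Type*} [Fintype ι] [DecidableEq ι]
    (s : Finset (ι → ℕ)) : ∃ N, s ⊆ Fintype.piFinset fun _ => range N := by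
  obtain ⟨N, hN⟩ := (s.biUnion fun f => univ.image f).exists_nat_subset_range
  exact ⟨N, fun f hf => Fintype.mem_piFinset.2 fun i =>
    hN (mem_biUnion.2 ⟨f, hf, mem_image_of_mem f (mem_univ i)⟩)⟩

namespace Module.End

variable {V : Type*} [AddCommGroup V] [Module ℚ V] {E X : Module.End ℚ V}

theorem apply_pow_succ_apply_of_apply_eq_zero (hEX : E * X = X * E + 1) (n : ℕ) {w : V}
    (hw : E w = 0) : E ((X ^ (n + 1)) w) = ((n : ℚ) + 1) • (X ^ n) w := by
  have := congr($(mul_pow_succ_of_mul_eq_add_one hEX n) w)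
  rw [← Nat.cast_succ] at this
  simp only [mul_apply, LinearMap.add_apply, hw, map_zero, zero_add, natCast_apply] at this
  rw [this, ← Nat.cast_smul_eq_nsmul ℚ, Nat.cast_succ]

theorem exists_eq_sum_pow_apply (hEX : E * X = X * E + 1) {N : ℕ} {v : V}
    (hv : (E ^ N) v = 0) :
    ∃ c : ℕ → V, (∀ n, E (c n) = 0) ∧ v = ∑ n ∈ range N, (X ^ n) (c n) := by
  induction N generalizing v with
  | zero => exact ⟨0, fun _ => map_zero E, by simpa using hv⟩
  | succ N ih =>
    obtain ⟨b, hb, hEv⟩ := ih (v := E v) (by rwa [← mul_apply, ← pow_succ])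
    set u := ∑ m ∈ range N, ((m : ℚ) + 1)⁻¹ • (X ^ (m + 1)) (b m)
    have hEu : E u = E v := by
      simp only [u, map_sum, map_smul, apply_pow_succ_apply_of_apply_eq_zero hEX _ (hb _),
        smul_smul]
      rw [hEv]
      refine sum_congr rfl fun m _ => ?_
      rw [inv_mul_cancel₀ (by positivity), one_smul]
    refine ⟨Nat.rec (v - u) fun m _ => ((m : ℚ) + 1)⁻¹ • b m, ?_, ?_⟩
    · rintro (_ | m)
      · simp [hEu]
      · simp [hb]
    · simp [sum_range_succ', u]

end Module.End

section Expansion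

variable {R : Type*} [CommSemiring R] {V : Type*} [AddCommGroup V] [Module R V] [Module ℚ V]

theorem exists_eq_sum_pow_smul_of_mem {E : V →+ V} {r : R}
    (hE : ∀ w, E (r • w) = w + r • E w) {K : Submodule ℚ V} (hEK : ∀ w ∈ K, E w ∈ K)
    (hrK : ∀ w ∈ K, r • w ∈ K) {N : ℕ} {w : V} (hw : w ∈ K) (hN : E^[N] w = 0) :
    ∃ b : ℕ → K, (∀ n, E (b n) = 0) ∧ w = ∑ n ∈ range N, r ^ n • (b n : V) := by
  obtain ⟨E', hE'⟩ : ∃ E' : Module.End ℚ K, ∀ u, (E' u : V) = E u :=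
    ⟨E.toRatLinearMap.restrict hEK, fun _ => rfl⟩
  obtain ⟨X', hX'⟩ : ∃ X' : Module.End ℚ K, ∀ u, (X' u : V) = r • u :=
    ⟨(DistribSMul.toLinearMap ℚ V r).restrict hrK, fun _ => rfl⟩
  have hX'pow (n : ℕ) (u : K) : ((X' ^ n) u : V) = r ^ n • (u : V) := by
    induction n with
    | zero => simp
    | succ n ih => rw [pow_succ', Module.End.mul_apply, hX', ih, smul_smul, ← pow_succ']
  have hEX : E' * X' = X' * E' + 1 := by
    ext u
    simp only [Module.End.mul_apply, LinearMap.add_apply, Module.End.one_apply,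
      Submodule.coe_add, hE', hX', hE, add_comm]
  have hE'N : (E' ^ N) ⟨w, hw⟩ = 0 := by
    ext
    have hsemi : Function.Semiconj Subtype.val E' E := hE'
    rw [Module.End.pow_apply, hsemi.iterate_right N]
    exact hN
  obtain ⟨b, hb, hwb⟩ := Module.End.exists_eq_sum_pow_apply hEX hE'N
  refine ⟨b, fun n => by rw [← hE', hb, Submodule.coe_zero], ?_⟩
  simpa only [Submodule.coe_sum, hX'pow] using congr($(hwb).1)

theorem exists_eq_sum_prod_pow_smul (d : ℕ) (E : Fin d → V →+ V) (x : Fin d → R)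
    (hcomm : ∀ i j, ∀ v : V, E i (E j v) = E j (E i v))
    (hnil : ∀ i, ∀ v : V, ∃ N, (E i)^[N] v = 0)
    (hE : ∀ i j, ∀ v : V, E i (x j • v) = (if i = j then v else 0) + x j • E i v) (v : V) :
    ∃ (s : Finset (Fin d → ℕ)) (c : (Fin d → ℕ) → V),
      (∀ ι i, E i (c ι) = 0) ∧ v = ∑ ι ∈ s, (∏ j, x j ^ ι j) • c ι := by
  induction d generalizing v with
  | zero => exact ⟨{0}, fun _ => v, fun _ i => i.elim0, by simp⟩
  | succ d ih =>
    obtain ⟨s, c, hc, hv⟩ := ih (fun i => E i.succ) (fun i => x i.succ)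
      (fun i j => hcomm i.succ j.succ) (fun i => hnil i.succ)
      (fun i j w => by simpa [Fin.succ_inj] using hE i.succ j.succ w) v
    let K : Submodule ℚ V := ⨅ i : Fin d, LinearMap.ker (E i.succ).toRatLinearMap
    have mem_K {w : V} : w ∈ K ↔ ∀ i : Fin d, E i.succ w = 0 := by
      simp [K, Submodule.mem_iInf]
    have hEK : ∀ w ∈ K, E 0 w ∈ K := fun w hw =>
      mem_K.2 fun i => by rw [← hcomm, mem_K.1 hw i, map_zero]
    have hxK : ∀ w ∈ K, x 0 • w ∈ K := fun w hw =>
      mem_K.2 fun i => by simp [hE, Fin.succ_ne_zero, mem_K.1 hw i]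
    have hexp (κ : Fin d → ℕ) : ∃ (N : ℕ) (b : ℕ → K),
        (∀ n, E 0 (b n) = 0) ∧ c κ = ∑ n ∈ range N, x 0 ^ n • (b n : V) := by
      obtain ⟨N, hN⟩ := hnil 0 (c κ)
      exact ⟨N, exists_eq_sum_pow_smul_of_mem (by simpa using hE 0 0) hEK hxK (mem_K.2 (hc κ)) hN⟩
    choose M b hb hcb using hexp
    obtain ⟨cons, hcons⟩ : ∃ e : (_ : Fin d → ℕ) × ℕ ↪ (Fin (d + 1) → ℕ),
        ∀ p, e p = Fin.cons p.2 p.1 :=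
      ⟨⟨fun p => Fin.cons p.2 p.1, fun ⟨_, _⟩ ⟨_, _⟩ h => by
        obtain ⟨rfl, rfl⟩ := Fin.cons_injective2 h; rfl⟩, fun _ => rfl⟩
    refine ⟨(s.sigma fun κ => range (M κ)).map cons, fun ι => b (Fin.tail ι) (ι 0),
      fun ι i => ?_, ?_⟩
    · cases i using Fin.cases with
      | zero => exact hb _ _
      | succ i => exact mem_K.1 (b _ _).2 i
    rw [sum_map, sum_sigma, hv]
    refine sum_congr rfl fun κ _ => ?_
    rw [hcb κ, smul_sum]
    refine sum_congr rfl fun n _ => ?_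
    simp only [hcons, Fin.prod_univ_succ, Fin.cons_zero, Fin.cons_succ, Fin.tail_cons]
    rw [mul_comm, mul_smul]

end Expansion

theorem multivariable_expansion_general
    (R : Type*) [CommRing R]
    (V : Type*) [AddCommGroup V] [Module R V] [Module ℚ V]
    (d : ℕ) (E : Fin d → (V →+ V)) (x : Fin d → R)
    (hcomm : ∀ i j, ∀ v : V, E i (E j v) = E j (E i v))
    (hnil : ∀ i, ∀ v : V, ∃ N, (E i)^[N] v = 0)
    (hE : ∀ i j, ∀ v : V, E i (x j • v) = (if i = j then v else 0) + x j • E i v)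
    (v : V) :
    ∃ (N : ℕ) (c : (Fin d → ℕ) → V),
      (∀ ι, ∀ i, E i (c ι) = 0) ∧
      v = ∑ ι ∈ Fintype.piFinset (fun _ : Fin d => Finset.range N),
            (∏ j, x j ^ ι j) • c ι := by
  classical
  obtain ⟨s, c, hc, hv⟩ := exists_eq_sum_prod_pow_smul d E x hcomm hnil hE v
  obtain ⟨N, hs⟩ := s.exists_subset_piFinset_range
  refine ⟨N, fun ι => if ι ∈ s then c ι else 0, fun ι i => ?_, ?_⟩
  · dsimp only
    split_ifs
    exacts [hc ι i, map_zero _]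
  · simp_rw [smul_ite, smul_zero]
    rw [sum_ite_mem, inter_eq_right.2 hs, hv]

/-- Multivariable expansion: if `V` is a module over a commutative `ℚ`-algebra `R`
equipped with pairwise commuting, locally nilpotent additive operators `E₀,…,E_{d-1}`
and elements `x₀,…,x_{d-1} ∈ R` with `E i (x j • v) = δ_{ij} v + x j • E i v`, then
every `v` has a finite expansion `v = ∑ c_{i₀…i_{d-1}} x₀^{i₀} ⋯ x_{d-1}^{i_{d-1}}`
with all coefficients killed by every `E i`. -/
theorem multivariable_expansion
    (R : Type*) [CommRing R] [Algebra ℚ R]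
    (V : Type*) [AddCommGroup V] [Module R V] [Module ℚ V] [IsScalarTower ℚ R V]
    (d : ℕ) (E : Fin d → (V →+ V)) (x : Fin d → R)
    (hcomm : ∀ i j, ∀ v : V, E i (E j v) = E j (E i v))
    (hnil : ∀ i, ∀ v : V, ∃ N, (E i)^[N] v = 0)
    (hE : ∀ i j, ∀ v : V, E i (x j • v) = (if i = j then v else 0) + x j • E i v)
    (v : V) :
    ∃ (N : ℕ) (c : (Fin d → ℕ) → V),
      (∀ ι, ∀ i, E i (c ι) = 0) ∧
      v = ∑ ι ∈ Fintype.piFinset (fun _ : Fin d => Finset.range N),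
            (∏ j, x j ^ ι j) • c ι :=
  multivariable_expansion_general R V d E x hcomm hnil hE v
end
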